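/- Let $U:\mathbb{R}\to\mathbb{R}$ be a strictly concave, strictly increasing, continuously differentiable function with $k e^{-\alpha x}\le U'(x)\le K e^{-\alpha x}$ for all $x$ ($0<k\le 1\le K$, $\alpha>0$), and let $V(y)=\sup_{x\in\mathbb{R}}(U(x)-xy)$ be its convex conjugate, $\tilde V(y)=\frac{1}{\alpha}y\log y - \frac{y}{\alpha}$ the conjugate of $-\frac1\alpha e^{-\alpha x}$. Then for all $y>0$: $K\,\tilde V(y/K) + V(0^+) \le V(y) \le k\,\tilde V(y/k) + V(0^+)$, where $V(0^+)=\sup_x U(x)$. Consequently $\frac{1}{\alpha}\tilde V_1(y) - \frac{y}{\alpha}\log K - N \le V(y) \le \frac{1}{\alpha}\tilde V_1(y) - \frac{y}{\alpha}\log k + N$ for $\tilde V_1(y)=y\log y - y$ and $N=|\sup_x U(x)|$. -/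

import Mathlib

open Real Filter Set

theorem stmt_6 (U : ℝ → ℝ) (k K α : ℝ) (hk : 0 < k) (hk1 : k ≤ 1) (h1K : 1 ≤ K) (hα : 0 < α)
    (hmono : StrictMono U)
    (hconc : StrictConcaveOn ℝ Set.univ U)
    (hdiff : Differentiable ℝ U)
    (hlb : ∀ x : ℝ, k * Real.exp (-α * x) ≤ deriv U x)
    (hub : ∀ x : ℝ, deriv U x ≤ K * Real.exp (-α * x))
    (V Vt Vt1 : ℝ → ℝ)
    (hV : ∀ y : ℝ, V y = sSup (Set.range fun x => U x - x * y))
    (hVt : ∀ y : ℝ, Vt y = (1 / α) * (y * Real.log y) - y / α)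
    (hVt1 : ∀ y : ℝ, Vt1 y = y * Real.log y - y)
    (V0 N : ℝ) (hV0 : V0 = sSup (Set.range U)) (hN : N = |sSup (Set.range U)|) :
    ∀ y : ℝ, 0 < y →
      (K * Vt (y / K) + V0 ≤ V y ∧ V y ≤ k * Vt (y / k) + V0) ∧
      ((1 / α) * Vt1 y - (y / α) * Real.log K - N ≤ V y ∧
        V y ≤ (1 / α) * Vt1 y - (y / α) * Real.log k + N) := by
  have hαne : α ≠ 0 := hα.ne'
  have hkne : k ≠ 0 := hk.ne'
  have hK : (0:ℝ) < K := lt_of_lt_of_le one_pos h1K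
  have hKne : K ≠ 0 := hK.ne'
  -- derivative facts
  have hder : ∀ (c x : ℝ), HasDerivAt (fun z => U z + c * Real.exp (-α * z))
      (deriv U x + c * (-α * Real.exp (-α * x))) x := by
    intro c x
    have h1 : HasDerivAt (fun z : ℝ => -α * z) (-α) x := by
      simpa using (HasDerivAt.const_mul (-α) (hasDerivAt_id x))
    have h2 := (Real.hasDerivAt_exp (-α * x)).comp x h1
    have h3 := h2.const_mul c
    have h4 := (hdiff x).hasDerivAt.add h3
    rw [show c * (-α * Real.exp (-α * x)) = c * (Real.exp (-α * x) * -α) by ring]; exact h4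
  have hmonk : Monotone (fun z => U z + (k / α) * Real.exp (-α * z)) := by
    apply monotone_of_deriv_nonneg
    · exact fun z => (hder (k / α) z).differentiableAt
    · intro z
      rw [(hder (k / α) z).deriv]
      have h1 := hlb z
      have h2 : (k / α) * (-α * Real.exp (-α * z)) = -(k * Real.exp (-α * z)) := by
        field_simp
      linarith
  have hantiK : Antitone (fun z => U z + (K / α) * Real.exp (-α * z)) := by
    apply antitone_of_deriv_nonpos
    · exact fun z => (hder (K / α) z).differentiableAt
    · intro z
      rw [(hder (K / α) z).deriv]
      have h1 := hub z
      have h2 : (K / α) * (-α * Real.exp (-α * z)) = -(K * Real.exp (-α * z)) := by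
        field_simp
      linarith
  -- range of U is bounded above
  have hbddU : BddAbove (Set.range U) := by
    refine ⟨U 0 + K / α, ?_⟩
    rintro _ ⟨z, rfl⟩
    rcases le_total z 0 with h | h
    · have h1 := hmono.monotone h
      have h2 : 0 < K / α := div_pos hK hα
      linarith
    · have h1 := hantiK h
      simp only at h1
      have h2 : Real.exp (-α * 0) = 1 := by norm_num
      have h3 := Real.exp_pos (-α * z)
      have h4 : 0 < K / α := div_pos hK hα
      nlinarith
  -- pointwise bounds on U via V0
  have hlimexp : Tendsto (fun z : ℝ => Real.exp (-α * z)) atTop (nhds 0) := by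
    have h1 : Tendsto (fun z : ℝ => α * z) atTop atTop :=
      Tendsto.const_mul_atTop hα tendsto_id
    have h2 : Tendsto (fun z : ℝ => Real.exp (-(α * z))) atTop (nhds 0) :=
      Real.tendsto_exp_neg_atTop_nhds_zero.comp h1
    simpa [neg_mul] using h2
  have hptlo : ∀ x : ℝ, U x + (k / α) * Real.exp (-α * x) ≤ V0 := by
    intro x
    have tend : Tendsto (fun z => (U x + (k / α) * Real.exp (-α * x)) - (k / α) * Real.exp (-α * z))
        atTop (nhds ((U x + (k / α) * Real.exp (-α * x)) - (k / α) * 0)) :=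
      tendsto_const_nhds.sub (hlimexp.const_mul _)
    rw [mul_zero, sub_zero] at tend
    refine le_of_tendsto tend ?_
    filter_upwards [eventually_ge_atTop x] with z hz
    have h1 := hmonk hz
    simp only at h1
    have h2 : U z ≤ V0 := hV0 ▸ le_csSup hbddU (mem_range_self z)
    linarith
  have hpthi : ∀ x : ℝ, V0 ≤ U x + (K / α) * Real.exp (-α * x) := by
    intro x
    rw [hV0]
    apply csSup_le (Set.range_nonempty U)
    rintro _ ⟨z, rfl⟩
    rcases le_total z x with h | h
    · have h1 := hmono.monotone h
      have h2 : 0 < (K / α) * Real.exp (-α * x) :=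
        mul_pos (div_pos hK hα) (Real.exp_pos _)
      linarith
    · have h1 := hantiK h
      simp only at h1
      have h2 : 0 < (K / α) * Real.exp (-α * z) :=
        mul_pos (div_pos hK hα) (Real.exp_pos _)
      linarith
  intro y hy
  -- pointwise conjugate inequality
  have hpt : ∀ c : ℝ, 0 < c → ∀ x : ℝ,
      -(c / α) * Real.exp (-α * x) - x * y ≤ (y / α) * Real.log (y / c) - y / α := by
    intro c hc x
    have hyc : (0:ℝ) < y / c := div_pos hy hc
    set L := Real.log (y / c) with hL
    have ht : (-α * x - L) + 1 ≤ Real.exp (-α * x - L) := Real.add_one_le_exp _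
    have hexpeq : Real.exp (-α * x - L) = Real.exp (-α * x) * (c / y) := by
      rw [Real.exp_sub, hL, Real.exp_log hyc]
      field_simp
    rw [hexpeq] at ht
    have h2 := mul_le_mul_of_nonneg_left ht hy.le
    have h3 : y * (Real.exp (-α * x) * (c / y)) = c * Real.exp (-α * x) := by
      field_simp
    rw [h3] at h2
    have key : -(c * Real.exp (-α * x)) ≤ α * (x * y) + y * L - y := by nlinarith
    have e1 : -(c / α) * Real.exp (-α * x) - x * y
        = (-(c * Real.exp (-α * x)) - α * (x * y)) / α := by
      field_simp
    have e2 : (y / α) * L - y / α = (α * (x * y) + y * L - y - α * (x * y)) / α := by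
      field_simp; ring
    rw [e1, e2]
    rw [div_le_div_iff_of_pos_right hα]
    linarith
  -- upper bound for V
  have hbddy : BddAbove (Set.range fun x => U x - x * y) := by
    refine ⟨V0 + ((y / α) * Real.log (y / k) - y / α), ?_⟩
    rintro _ ⟨x, rfl⟩
    have h1 := hptlo x
    have h2 := hpt k hk x
    simp only
    linarith
  have hVub : V y ≤ V0 + ((y / α) * Real.log (y / k) - y / α) := by
    rw [hV]
    apply csSup_le (Set.range_nonempty _)
    rintro _ ⟨x, rfl⟩
    have h1 := hptlo x
    have h2 := hpt k hk x
    simp only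
    linarith
  -- lower bound for V
  have hVlb : V0 + ((y / α) * Real.log (y / K) - y / α) ≤ V y := by
    rw [hV]
    have hE : Real.exp (-α * (-(Real.log (y / K) / α))) = y / K := by
      rw [show -α * (-(Real.log (y / K) / α)) = Real.log (y / K) by field_simp]
      exact Real.exp_log (div_pos hy hK)
    have h1 : U (-(Real.log (y / K) / α)) - (-(Real.log (y / K) / α)) * y
        ≤ sSup (Set.range fun x => U x - x * y) := le_csSup hbddy ⟨_, rfl⟩
    have h3 := hpthi (-(Real.log (y / K) / α))
    rw [hE] at h3
    have h4 : (K / α) * (y / K) = y / α := by field_simp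
    have h5 : (-(Real.log (y / K) / α)) * y = -((y / α) * Real.log (y / K)) := by ring
    linarith
  -- identities
  have idk : k * Vt (y / k) = (y / α) * Real.log (y / k) - y / α := by
    rw [hVt]; field_simp
  have idK : K * Vt (y / K) = (y / α) * Real.log (y / K) - y / α := by
    rw [hVt]; field_simp
  have hlogk : Real.log (y / k) = Real.log y - Real.log k := Real.log_div hy.ne' hkne
  have hlogK : Real.log (y / K) = Real.log y - Real.log K := Real.log_div hy.ne' hKne
  have id1 : (1 / α) * Vt1 y = (y / α) * Real.log y - y / α := by
    rw [hVt1]; ring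
  have ek : (y / α) * (Real.log y - Real.log k)
      = (y / α) * Real.log y - (y / α) * Real.log k := by ring
  have eK : (y / α) * (Real.log y - Real.log K)
      = (y / α) * Real.log y - (y / α) * Real.log K := by ring
  have hNV : -N ≤ V0 ∧ V0 ≤ N := by
    rw [hN, ← hV0]; exact ⟨neg_abs_le _, le_abs_self _⟩
  obtain ⟨hN1, hN2⟩ := hNV
  refine ⟨⟨by linarith, by linarith⟩, ?_, ?_⟩
  · rw [hlogK, eK] at hVlb; linarith
  · rw [hlogk, ek] at hVub; linarith
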